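/- In the λG-calculus, every typable term reduces to its degree-d simplification: for all d ≥ 1, t →g* simp_d(t). -/

import Mathlib

namespace LambdaG

/-- Simple types: base types and arrow types. -/
inductive Ty : Type
  | base : ℕ → Ty
  | arr : Ty → Ty → Ty
deriving DecidableEq

/-- The height of a type. -/
def Ty.height : Ty → ℕ
  | .base _ => 0
  | .arr A B => 1 + max A.height B.height

/-- Terms of the λG-calculus: simply typed λ-terms extended with wrappers `⟨t | s⟩`. -/
inductive GTm : Type
  | var : ℕ → Ty → GTm
  | lam : ℕ → Ty → GTm → GTm
  | app : GTm → GTm → GTm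
  | wrap : GTm → GTm → GTm
deriving DecidableEq

/-- Capture-avoiding substitution `t[x^B := s]` (bound variables assumed suitably renamed). -/
def GTm.subst : GTm → ℕ → Ty → GTm → GTm
  | .var y C, x, B, s => if y = x ∧ C = B then s else .var y C
  | .lam y C t, x, B, s =>
      if y = x ∧ C = B then .lam y C t else .lam y C (t.subst x B s)
  | .app t u, x, B, s => .app (t.subst x B s) (u.subst x B s)
  | .wrap t u, x, B, s => .wrap (t.subst x B s) (u.subst x B s)

/-- `t L`: append the memorized terms of the memory `L` to `t` as wrappers. -/
def GTm.appMem (t : GTm) (L : List GTm) : GTm := L.foldl GTm.wrap t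

/-- The (unique) type of a λG-term, if typable.  A wrapper has the type of its body. -/
def GTm.typeof : GTm → Option Ty
  | .var _ A => some A
  | .lam _ A t => (t.typeof).map (Ty.arr A)
  | .app t u =>
      match t.typeof, u.typeof with
      | some (.arr A B), some A' => if A = A' then some B else none
      | _, _ => none
  | .wrap t u =>
      match t.typeof, u.typeof with
      | some A, some _ => some A
      | _, _ => none

/-- Whether a term is an m-abstraction, i.e. of the form `(λx.t)L`. -/
def GTm.headIsLam : GTm → Bool
  | .lam _ _ _ => true
  | .wrap t _ => t.headIsLam
  | _ => false

/-- The degree of an m-abstraction: the height of its type (`none` for non-m-abstractions). -/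
def GTm.mAbsDegree (t : GTm) : Option ℕ :=
  if t.headIsLam then t.typeof.map Ty.height else none

/-- Reduction in the λG-calculus: contextual closure of
`(λx.t)L s →g ⟨t[x := s] | s⟩L`. -/
inductive GStep : GTm → GTm → Prop
  | beta (x : ℕ) (A : Ty) (t : GTm) (L : List GTm) (s : GTm) :
      GStep (GTm.app (GTm.appMem (GTm.lam x A t) L) s)
            (GTm.appMem (GTm.wrap (t.subst x A s) s) L)
  | lam (x : ℕ) (A : Ty) {t t' : GTm} : GStep t t' →
      GStep (GTm.lam x A t) (GTm.lam x A t')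
  | appL {t t' : GTm} (s : GTm) : GStep t t' → GStep (GTm.app t s) (GTm.app t' s)
  | appR (t : GTm) {s s' : GTm} : GStep s s' → GStep (GTm.app t s) (GTm.app t s')
  | wrapL {t t' : GTm} (s : GTm) : GStep t t' → GStep (GTm.wrap t s) (GTm.wrap t' s)
  | wrapR (t : GTm) {s s' : GTm} : GStep s s' → GStep (GTm.wrap t s) (GTm.wrap t s')

/-- Reduction of degree `d`: contraction of redexes whose m-abstraction has degree `d`. -/
inductive GStepD (d : ℕ) : GTm → GTm → Prop
  | beta (x : ℕ) (A : Ty) (t : GTm) (L : List GTm) (s : GTm)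
      (hdeg : (GTm.appMem (GTm.lam x A t) L).mAbsDegree = some d) :
      GStepD d (GTm.app (GTm.appMem (GTm.lam x A t) L) s)
               (GTm.appMem (GTm.wrap (t.subst x A s) s) L)
  | lam (x : ℕ) (A : Ty) {t t' : GTm} : GStepD d t t' →
      GStepD d (GTm.lam x A t) (GTm.lam x A t')
  | appL {t t' : GTm} (s : GTm) : GStepD d t t' → GStepD d (GTm.app t s) (GTm.app t' s)
  | appR (t : GTm) {s s' : GTm} : GStepD d s s' → GStepD d (GTm.app t s) (GTm.app t s')
  | wrapL {t t' : GTm} (s : GTm) : GStepD d t t' → GStepD d (GTm.wrap t s) (GTm.wrap t' s)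
  | wrapR (t : GTm) {s s' : GTm} : GStepD d s s' → GStepD d (GTm.wrap t s) (GTm.wrap t s')

/-- Forgetful reduction: contextual closure of `⟨t | s⟩ ▷ t`. -/
inductive GForget : GTm → GTm → Prop
  | drop (t s : GTm) : GForget (GTm.wrap t s) t
  | lam (x : ℕ) (A : Ty) {t t' : GTm} : GForget t t' →
      GForget (GTm.lam x A t) (GTm.lam x A t')
  | appL {t t' : GTm} (s : GTm) : GForget t t' → GForget (GTm.app t s) (GTm.app t' s)
  | appR (t : GTm) {s s' : GTm} : GForget s s' → GForget (GTm.app t s) (GTm.app t s')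
  | wrapL {t t' : GTm} (s : GTm) : GForget t t' → GForget (GTm.wrap t s) (GTm.wrap t' s)
  | wrapR (t : GTm) {s s' : GTm} : GForget s s' → GForget (GTm.wrap t s) (GTm.wrap t s')

/-- Typing judgments `Γ ⊢ t : A` of the λG-calculus. -/
inductive GHasType : (ℕ → Option Ty) → GTm → Ty → Prop
  | var {Γ : ℕ → Option Ty} {x : ℕ} {A : Ty} :
      Γ x = some A → GHasType Γ (GTm.var x A) A
  | lam {Γ : ℕ → Option Ty} {x : ℕ} {A : Ty} {t : GTm} {B : Ty} :
      GHasType (Function.update Γ x (some A)) t B →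
      GHasType Γ (GTm.lam x A t) (Ty.arr A B)
  | app {Γ : ℕ → Option Ty} {t s : GTm} {A B : Ty} :
      GHasType Γ t (Ty.arr A B) → GHasType Γ s A → GHasType Γ (GTm.app t s) B
  | wrap {Γ : ℕ → Option Ty} {t s : GTm} {A B : Ty} :
      GHasType Γ t A → GHasType Γ s B → GHasType Γ (GTm.wrap t s) A

/-- Decompose an m-abstraction `(λx.t)L` into its abstraction and memory. -/
def GTm.decomp : GTm → Option ((ℕ × Ty × GTm) × List GTm)
  | .lam x A t => some ((x, A, t), [])
  | .wrap t s => (t.decomp).map (fun p => (p.1, p.2 ++ [s]))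
  | _ => none

/-- Simplification of degree `d`: the complete development of all redexes of degree `d`. -/
def GTm.simpD (d : ℕ) : GTm → GTm
  | .var y A => .var y A
  | .lam y A t => .lam y A (t.simpD d)
  | .wrap t s => .wrap (t.simpD d) (s.simpD d)
  | .app t s =>
      if t.mAbsDegree = some d then
        match (t.simpD d).decomp with
        | some ((x, A, b), L) =>
            GTm.appMem (GTm.wrap (b.subst x A (s.simpD d)) (s.simpD d)) L
        | none => .app (t.simpD d) (s.simpD d)
      else .app (t.simpD d) (s.simpD d)

/-- The max-degree of a term: the maximum degree of its redexes, or `0` if none. -/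
def GTm.maxdeg : GTm → ℕ
  | .var _ _ => 0
  | .lam _ _ t => t.maxdeg
  | .wrap t s => max t.maxdeg s.maxdeg
  | .app t s => max (max t.maxdeg s.maxdeg) ((t.mAbsDegree).getD 0)

/-- Iterated simplification `simp_1(⋯ simp_D(t))`. -/
def GTm.simpDown : ℕ → GTm → GTm
  | 0, t => t
  | d + 1, t => GTm.simpDown d (t.simpD (d + 1))

/-- Full simplification: `simpfull(t) = simp_1(simp_2(⋯ simp_D(t)))` where `D = maxdeg t`. -/
def GTm.simpfull (t : GTm) : GTm := GTm.simpDown t.maxdeg t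

/-- The weight of a term: its number of wrappers. -/
def GTm.weight : GTm → ℕ
  | .var _ _ => 0
  | .lam _ _ t => t.weight
  | .app t s => t.weight + s.weight
  | .wrap t s => t.weight + s.weight + 1

/-! `simp_d` is a development: by induction on the term, the function and argument of an
application reduce to their simplifications, and when the simplified function decomposes as
`(λx.b)L`, one `→g` step performs the contraction that `simp_d` performs. -/

theorem GTm.eq_appMem_of_decomp_eq_some {u b : GTm} {x : ℕ} {A : Ty} {L : List GTm}
    (h : u.decomp = some ((x, A, b), L)) : u = GTm.appMem (GTm.lam x A b) L := by
  induction u generalizing L with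
  | var => simp [GTm.decomp] at h
  | app => simp [GTm.decomp] at h
  | lam =>
    obtain ⟨⟨rfl, rfl, rfl⟩, rfl⟩ := by simpa [GTm.decomp] using h
    rfl
  | wrap t s iht =>
    obtain ⟨L', hdecomp, rfl⟩ := by simpa [GTm.decomp] using h
    rw [iht hdecomp]
    simp [GTm.appMem]

namespace GStep

open Relation

theorem beta_of_decomp_eq_some {u b : GTm} {x : ℕ} {A : Ty} {L : List GTm}
    (h : u.decomp = some ((x, A, b), L)) (s : GTm) :
    GStep (GTm.app u s) (GTm.appMem (GTm.wrap (b.subst x A s) s) L) := by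
  rw [GTm.eq_appMem_of_decomp_eq_some h]
  exact beta x A b L s

theorem reflTransGen_lam (x : ℕ) (A : Ty) {t t' : GTm} (h : ReflTransGen GStep t t') :
    ReflTransGen GStep (GTm.lam x A t) (GTm.lam x A t') :=
  ReflTransGen.lift (GTm.lam x A) (fun _ _ => lam x A) _ _ h

theorem reflTransGen_app {t t' s s' : GTm} (ht : ReflTransGen GStep t t')
    (hs : ReflTransGen GStep s s') :
    ReflTransGen GStep (GTm.app t s) (GTm.app t' s') :=
  (ReflTransGen.lift (GTm.app · s) (fun _ _ => appL s) _ _ ht).trans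
    (ReflTransGen.lift (GTm.app t') (fun _ _ => appR t') _ _ hs)

theorem reflTransGen_wrap {t t' s s' : GTm} (ht : ReflTransGen GStep t t')
    (hs : ReflTransGen GStep s s') :
    ReflTransGen GStep (GTm.wrap t s) (GTm.wrap t' s') :=
  (ReflTransGen.lift (GTm.wrap · s) (fun _ _ => wrapL s) _ _ ht).trans
    (ReflTransGen.lift (GTm.wrap t') (fun _ _ => wrapR t') _ _ hs)

end GStep

theorem reduces_to_simpD_general {t : GTm} (d : ℕ) :
    Relation.ReflTransGen GStep t (t.simpD d) := by
  induction t with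
  | var => exact .refl
  | lam x A t ih => exact GStep.reflTransGen_lam x A ih
  | wrap t s iht ihs => exact GStep.reflTransGen_wrap iht ihs
  | app t s iht ihs =>
    have hsubterms := GStep.reflTransGen_app iht ihs
    rw [GTm.simpD]
    split_ifs
    · split
      · next hdecomp => exact hsubterms.tail (GStep.beta_of_decomp_eq_some hdecomp _)
      · exact hsubterms
    · exact hsubterms

/-- Every typable term reduces to its degree-`d` simplification. -/
theorem reduces_to_simpD {Γ : ℕ → Option Ty} {t : GTm} {A : Ty}
    (ht : GHasType Γ t A) (d : ℕ) (hd : 1 ≤ d) :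
    Relation.ReflTransGen GStep t (t.simpD d) :=
  reduces_to_simpD_general d

end LambdaG
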